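/- Let f, g ∈ ℤ[A, A⁻¹] satisfy: h(f) = 40 with the coefficient of A^{40} in f equal to 1, ℓ(f) = −52 with the coefficient of A^{−52} in f equal to −1, h(g) = 34 with the coefficient of A^{34} in g equal to −1, and ℓ(g) = −58 with the coefficient of A^{−58} in g equal to 1. Let δ = −A²−A⁻², and define f₁ = f, g₁ = g, f_{n+1} = f_n·f, g_{n+1} = f_n·g + g_n·f + δ·g_n·g for n ≥ 1. Set W_n = f_n·(−A¹¹−2A³−A⁻⁵) + g_n·(A⁹+A−A⁻³+A⁻⁷). Then for every n ≥ 1, h(W_n) = 40n+11 with the coefficient of A^{40n+11} in W_n equal to −1, and ℓ(W_n) = −60n−5 with the coefficient of A^{−60n−5} in W_n equal to (−1)^{n+1}; hence span(W_n) = 100n+16. In particular, span(W_n) ≠ span(W_{n'}) for n ≠ n', and span(W_n) ≠ 16 for all n ≥ 1. -/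

import Mathlib

open LaurentPolynomial Finset

/-- The coefficient of `A^k` in the Laurent polynomial `y ∈ ℤ[A,A⁻¹]`. -/
noncomputable def coeffA (y : LaurentPolynomial ℤ) (k : ℤ) : ℤ := AddMonoidAlgebra.coeff y k

/-- `y` has highest exponent `d`, with coefficient `c` (nonzero) on `A^d`. -/
def HiCoeff (y : LaurentPolynomial ℤ) (d c : ℤ) : Prop :=
  coeffA y d = c ∧ c ≠ 0 ∧ ∀ k, d < k → coeffA y k = 0

/-- `y` has lowest exponent `d`, with coefficient `c` (nonzero) on `A^d`. -/
def LoCoeff (y : LaurentPolynomial ℤ) (d c : ℤ) : Prop :=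
  coeffA y d = c ∧ c ≠ 0 ∧ ∀ k, k < d → coeffA y k = 0

/-- `y` has highest exponent `d`: `h(y) = d`. -/
def IsHi (y : LaurentPolynomial ℤ) (d : ℤ) : Prop :=
  coeffA y d ≠ 0 ∧ ∀ k, d < k → coeffA y k = 0

/-- `y` has lowest exponent `d`: `ℓ(y) = d`. -/
def IsLo (y : LaurentPolynomial ℤ) (d : ℤ) : Prop :=
  coeffA y d ≠ 0 ∧ ∀ k, k < d → coeffA y k = 0

/-- P(n) = A^{−n−6} + (A⁴+A⁻⁴)·Σ_{k=1}^{n} (−1)^k A^{4k−n−2} -/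
noncomputable def P (n : ℕ) : LaurentPolynomial ℤ :=
  T (-(n:ℤ) - 6) +
    (T 4 + T (-4)) * ∑ k ∈ Finset.Icc 1 n, (-1 : LaurentPolynomial ℤ)^k * T (4*(k:ℤ) - n - 2)

/-- P̄(n) = A^{n+6} + (A⁴+A⁻⁴)·Σ_{k=1}^{n} (−1)^k A^{−4k+n+2} -/
noncomputable def Pbar (n : ℕ) : LaurentPolynomial ℤ :=
  T ((n:ℤ) + 6) +
    (T 4 + T (-4)) * ∑ k ∈ Finset.Icc 1 n, (-1 : LaurentPolynomial ℤ)^k * T (-4*(k:ℤ) + n + 2)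

/-- Q(j) = −A^{2−j} + Σ_{k=0}^{j} (−1)^{k+1} A^{4k−j−2} -/
noncomputable def Q (j : ℕ) : LaurentPolynomial ℤ :=
  -T (2 - (j:ℤ)) + ∑ k ∈ Finset.range (j+1), (-1 : LaurentPolynomial ℤ)^(k+1) * T (4*(k:ℤ) - j - 2)

/-- N(j) = (−A⁶−A⁻⁶)·(−A³)^j + (−A⁴−A⁻⁴+2)·Q(j) -/
noncomputable def N (j : ℕ) : LaurentPolynomial ℤ :=
  (-T 6 - T (-6)) * (-T 3)^j + (-T 4 - T (-4) + 2) * Q j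

/-- R(m) = A^{−m−5} + (A⁴+A⁻⁴)·Σ_{k=1}^{m−1} (−1)^k A^{4k−m−1} -/
noncomputable def Rm (m : ℕ) : LaurentPolynomial ℤ :=
  T (-(m:ℤ) - 5) +
    (T 4 + T (-4)) * ∑ k ∈ Finset.Icc 1 (m-1), (-1 : LaurentPolynomial ℤ)^k * T (4*(k:ℤ) - m - 1)

/-! Only extreme monomials matter: the top (bottom) coefficient of a product is the product of
the top (bottom) coefficients, and a summand of strictly larger top (smaller bottom) degree decides
that of a sum. By induction `F n = fⁿ`, while `G n` has top term `-n A^(40n-6)` and bottom term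
`(-1)^(n+1) A^(-60n+2)`: at the top of the recurrence `F n g` and `G n f` tie and add up to
`-(n+1)`, with the `δ`-term two degrees lower, while at the bottom the `δ`-term alone is lowest.
In `W n` the `F n`-part then wins at the top and the `G n`-part at the bottom. -/

section Extremes

variable {a b : ℤ[T;T⁻¹]} {d e c c' : ℤ}

lemma coeffA_add (a b : ℤ[T;T⁻¹]) (k : ℤ) : coeffA (a + b) k = coeffA a k + coeffA b k := by
  simp [coeffA]

lemma le_of_mem_support_of_coeffA_eq_zero (h : ∀ k, d < k → coeffA a k = 0) :
    ∀ i ∈ a.coeff.support, i ≤ d :=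
  fun i hi => le_of_not_gt fun hdi => Finsupp.mem_support_iff.1 hi (h i hdi)

lemma coeffA_mul_add_of_le (ha : ∀ k, d < k → coeffA a k = 0)
    (hb : ∀ k, e < k → coeffA b k = 0) :
    coeffA (a * b) (d + e) = coeffA a d * coeffA b e := by
  classical
  have hsa := le_of_mem_support_of_coeffA_eq_zero ha
  have hsb := le_of_mem_support_of_coeffA_eq_zero hb
  simp only [coeffA, AddMonoidAlgebra.coeff_mul, Finsupp.sum]
  rw [Finset.sum_eq_single d, Finset.sum_eq_single e, if_pos rfl]
  · exact fun j hj hje => if_neg fun h => hje (by have := hsb j hj; omega)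
  · intro he; rw [if_pos rfl, Finsupp.notMem_support_iff.1 he, mul_zero]
  · refine fun i hi hid => Finset.sum_eq_zero fun j hj => if_neg fun h => hid ?_
    have := hsa i hi; have := hsb j hj; omega
  · refine fun hd => Finset.sum_eq_zero fun j _ => ?_
    rw [Finsupp.notMem_support_iff.1 hd, zero_mul, ite_self]

lemma coeffA_mul_eq_zero_of_lt (ha : ∀ k, d < k → coeffA a k = 0)
    (hb : ∀ k, e < k → coeffA b k = 0) {k : ℤ} (hk : d + e < k) :
    coeffA (a * b) k = 0 := by
  classical
  by_contra hne
  obtain ⟨i, hi, j, hj, rfl⟩ := Finset.mem_add.1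
    (AddMonoidAlgebra.support_coeff_mul_subset a b (Finsupp.mem_support_iff.2 hne))
  have := le_of_mem_support_of_coeffA_eq_zero ha i hi
  have := le_of_mem_support_of_coeffA_eq_zero hb j hj
  omega

lemma HiCoeff.mul (ha : HiCoeff a d c) (hb : HiCoeff b e c') :
    HiCoeff (a * b) (d + e) (c * c') :=
  ⟨by rw [coeffA_mul_add_of_le ha.2.2 hb.2.2, ha.1, hb.1], mul_ne_zero ha.2.1 hb.2.1,
    fun _ => coeffA_mul_eq_zero_of_lt ha.2.2 hb.2.2⟩

lemma HiCoeff.pow (ha : HiCoeff a d c) (n : ℕ) : HiCoeff (a ^ n) (n * d) (c ^ n) := by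
  induction n with
  | zero =>
    refine ⟨by simp [coeffA], pow_ne_zero 0 ha.2.1, fun k hk => ?_⟩
    simp only [coeffA, pow_zero, ← T_zero, T_apply, ite_eq_right_iff, one_ne_zero, imp_false]
    omega
  | succ n ih =>
    rw [pow_succ, pow_succ]
    convert ih.mul ha using 1
    push_cast; ring

lemma HiCoeff.add (ha : HiCoeff a d c) (hb : HiCoeff b d c') (h : c + c' ≠ 0) :
    HiCoeff (a + b) d (c + c') :=
  ⟨by rw [coeffA_add, ha.1, hb.1], h,
    fun k hk => by rw [coeffA_add, ha.2.2 k hk, hb.2.2 k hk, add_zero]⟩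

lemma HiCoeff.add_left_of_lt (ha : HiCoeff a d c) (hb : HiCoeff b e c') (h : e < d) :
    HiCoeff (a + b) d c :=
  ⟨by rw [coeffA_add, ha.1, hb.2.2 d h, add_zero], ha.2.1,
    fun k hk => by rw [coeffA_add, ha.2.2 k hk, hb.2.2 k (h.trans hk), add_zero]⟩

lemma loCoeff_iff_hiCoeff_invert : LoCoeff a d c ↔ HiCoeff (invert a) (-d) c := by
  have hinv : ∀ k, coeffA (invert a) k = coeffA a (-k) := invert_apply a
  simp only [LoCoeff, HiCoeff, hinv, neg_neg]
  refine and_congr_right fun _ => and_congr_right fun _ =>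
    ⟨fun h k hk => h (-k) (by omega), fun h k hk => by simpa using h (-k) (by omega)⟩

lemma LoCoeff.mul (ha : LoCoeff a d c) (hb : LoCoeff b e c') :
    LoCoeff (a * b) (d + e) (c * c') := by
  rw [loCoeff_iff_hiCoeff_invert] at *
  rw [map_mul, neg_add]
  exact ha.mul hb

lemma LoCoeff.pow (ha : LoCoeff a d c) (n : ℕ) : LoCoeff (a ^ n) (n * d) (c ^ n) := by
  rw [loCoeff_iff_hiCoeff_invert] at *
  rw [map_pow, ← mul_neg]
  exact ha.pow n

lemma LoCoeff.add_right_of_lt (ha : LoCoeff a e c') (hb : LoCoeff b d c) (h : d < e) :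
    LoCoeff (a + b) d c := by
  rw [loCoeff_iff_hiCoeff_invert] at *
  rw [map_add, add_comm]
  exact hb.add_left_of_lt ha (neg_lt_neg h)

end Extremes

lemma hiCoeff_delta : HiCoeff (-T 2 - T (-2)) 2 (-1) :=
  ⟨by simp [coeffA], by norm_num, fun k hk => by simp [coeffA]; split_ifs <;> omega⟩

lemma loCoeff_delta : LoCoeff (-T 2 - T (-2)) (-2) (-1) :=
  ⟨by simp [coeffA], by norm_num, fun k hk => by simp [coeffA]; split_ifs <;> omega⟩

lemma hiCoeff_bracket_zero : HiCoeff (-T 11 - 2 * T 3 - T (-5)) 11 (-1) :=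
  ⟨by simp [coeffA, two_mul], by norm_num,
    fun k hk => by simp [coeffA, two_mul]; split_ifs <;> omega⟩

lemma loCoeff_bracket_zero : LoCoeff (-T 11 - 2 * T 3 - T (-5)) (-5) (-1) :=
  ⟨by simp [coeffA, two_mul], by norm_num,
    fun k hk => by simp [coeffA, two_mul]; split_ifs <;> omega⟩

lemma hiCoeff_bracket_infty : HiCoeff (T 9 + T 1 - T (-3) + T (-7)) 9 1 :=
  ⟨by simp [coeffA], by norm_num, fun k hk => by simp [coeffA]; split_ifs <;> omega⟩

lemma loCoeff_bracket_infty : LoCoeff (T 9 + T 1 - T (-3) + T (-7)) (-7) 1 :=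
  ⟨by simp [coeffA], by norm_num, fun k hk => by simp [coeffA]; split_ifs <;> omega⟩

section Recurrence

variable {f g : ℤ[T;T⁻¹]} {F G : ℕ → ℤ[T;T⁻¹]}

lemma eq_pow_of_succ_eq_mul (hF1 : F 1 = f) (hFrec : ∀ n : ℕ, 1 ≤ n → F (n + 1) = F n * f)
    {n : ℕ} (hn : 1 ≤ n) : F n = f ^ n := by
  induction n, hn using Nat.le_induction with
  | base => rw [hF1, pow_one]
  | succ m hm ih => rw [hFrec m hm, ih, pow_succ]

lemma hiCoeff_of_recurrence (hfh : HiCoeff f 40 1) (hgh : HiCoeff g 34 (-1)) (hG1 : G 1 = g)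
    (hGrec : ∀ n : ℕ, 1 ≤ n →
      G (n + 1) = f ^ n * g + G n * f + (-T 2 - T (-2)) * (G n * g))
    {n : ℕ} (hn : 1 ≤ n) : HiCoeff (G n) (40 * n - 6) (-n) := by
  induction n, hn using Nat.le_induction with
  | base => convert hG1 ▸ hgh using 1 <;> norm_num
  | succ m hm ih =>
    have hfg : HiCoeff (f ^ m * g) (40 * m + 34) (-1) := by
      convert (hfh.pow m).mul hgh using 1 <;> ring
    have hGf : HiCoeff (G m * f) (40 * m + 34) (-m) := by
      convert ih.mul hfh using 1 <;> ring
    have hδGg : HiCoeff ((-T 2 - T (-2)) * (G m * g)) (40 * m + 30) (-m) := by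
      convert hiCoeff_delta.mul (ih.mul hgh) using 1 <;> ring
    rw [hGrec m hm]
    convert (hfg.add hGf (by omega)).add_left_of_lt hδGg (by omega) using 1 <;> push_cast <;> ring

lemma loCoeff_of_recurrence (hfl : LoCoeff f (-52) (-1)) (hgl : LoCoeff g (-58) 1) (hG1 : G 1 = g)
    (hGrec : ∀ n : ℕ, 1 ≤ n →
      G (n + 1) = f ^ n * g + G n * f + (-T 2 - T (-2)) * (G n * g))
    {n : ℕ} (hn : 1 ≤ n) : LoCoeff (G n) (-60 * n + 2) ((-1) ^ (n + 1)) := by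
  induction n, hn using Nat.le_induction with
  | base => convert hG1 ▸ hgl using 1 <;> norm_num
  | succ m hm ih =>
    have hfg : LoCoeff (f ^ m * g) (-52 * m - 58) ((-1) ^ m) := by
      convert (hfl.pow m).mul hgl using 1 <;> ring
    have hGf : LoCoeff (G m * f) (-60 * m - 50) ((-1) ^ m) := by
      convert ih.mul hfl using 1 <;> ring
    have hδGg : LoCoeff ((-T 2 - T (-2)) * (G m * g)) (-60 * m - 58) ((-1) ^ m) := by
      convert loCoeff_delta.mul (ih.mul hgl) using 1 <;> ring
    rw [hGrec m hm, add_assoc]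
    convert hfg.add_right_of_lt (hGf.add_right_of_lt hδGg (by omega)) (by omega) using 1 <;>
      push_cast <;> ring

end Recurrence

/-- extreme monomials and span of W_n = f_n·(−A¹¹−2A³−A⁻⁵) + g_n·(A⁹+A−A⁻³+A⁻⁷). -/
theorem stmt_12 (f g : LaurentPolynomial ℤ)
    (hfh : HiCoeff f 40 1) (hfl : LoCoeff f (-52) (-1))
    (hgh : HiCoeff g 34 (-1)) (hgl : LoCoeff g (-58) 1)
    (F G : ℕ → LaurentPolynomial ℤ)
    (hF1 : F 1 = f) (hG1 : G 1 = g)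
    (hFrec : ∀ n : ℕ, 1 ≤ n → F (n+1) = F n * f)
    (hGrec : ∀ n : ℕ, 1 ≤ n →
      G (n+1) = F n * g + G n * f + (-T 2 - T (-2)) * (G n * g))
    (W : ℕ → LaurentPolynomial ℤ)
    (hW : ∀ n : ℕ, W n = F n * (-T 11 - 2 * T 3 - T (-5)) + G n * (T 9 + T 1 - T (-3) + T (-7))) :
    (∀ n : ℕ, 1 ≤ n →
      HiCoeff (W n) (40*(n:ℤ) + 11) (-1) ∧
      LoCoeff (W n) (-60*(n:ℤ) - 5) ((-1)^(n+1)) ∧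
      (40*(n:ℤ) + 11) - (-60*(n:ℤ) - 5) = 100*(n:ℤ) + 16) ∧
    (∀ n n' : ℕ, 1 ≤ n → 1 ≤ n' → n ≠ n' → 100*(n:ℤ) + 16 ≠ 100*(n':ℤ) + 16) ∧
    (∀ n : ℕ, 1 ≤ n → 100*(n:ℤ) + 16 ≠ 16) := by
  have hF : ∀ n : ℕ, 1 ≤ n → F n = f ^ n := fun n hn => eq_pow_of_succ_eq_mul hF1 hFrec hn
  have hGrec' : ∀ n : ℕ, 1 ≤ n →
      G (n + 1) = f ^ n * g + G n * f + (-T 2 - T (-2)) * (G n * g) := fun n hn => by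
    rw [hGrec n hn, hF n hn]
  refine ⟨fun n hn => ⟨?_, ?_, by ring⟩, fun n n' _ _ hne => by omega, fun n hn => by omega⟩
  · have hFX := (hfh.pow n).mul hiCoeff_bracket_zero
    have hGY := (hiCoeff_of_recurrence hfh hgh hG1 hGrec' hn).mul hiCoeff_bracket_infty
    rw [hW, hF n hn]
    convert hFX.add_left_of_lt hGY (by omega) using 1 <;> ring
  · have hFX := (hfl.pow n).mul loCoeff_bracket_zero
    have hGY := (loCoeff_of_recurrence hfl hgl hG1 hGrec' hn).mul loCoeff_bracket_infty
    rw [hW, hF n hn]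
    convert hFX.add_right_of_lt hGY (by omega) using 1 <;> ring
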